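/- Let N ≥ 2 and let g : ℝ → ℝ be strictly convex and nonincreasing on the interval (0, π]. For s, t ∈ [0, 2π) let d(s, t) := min(|s − t|, 2π − |s − t|) denote the geodesic distance on a loop of circumference 2π. Then for any points 0 ≤ y₁ < y₂ < ⋯ < y_N < 2π one has ∑_{1 ≤ j < j' ≤ N} g(d(y_j, y_{j'})) ≥ ∑_{1 ≤ j < j' ≤ N} g((2π/N)·min(j' − j, N − (j' − j))), and the inequality is strict unless all N cyclic gaps y₂ − y₁, …, y_N − y_{N−1}, 2π − y_N + y₁ are equal to 2π/N. -/

import Mathlib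

/-- Periodic extension of a configuration `y` on the loop of circumference `2π`:
`periodicExt y (j + N) = periodicExt y j + 2π`, and `periodicExt y j = y j` for `j < N`. -/
noncomputable def periodicExt {N : ℕ} (y : Fin N → ℝ) (k : ℕ) : ℝ :=
  if h : 0 < N then y ⟨k % N, Nat.mod_lt k h⟩ + 2 * Real.pi * (k / N : ℕ) else 0

/-- The `j`-th cyclic gap of the configuration `y` on the loop of circumference `2π`:
for `j < N - 1` it is `y (j+1) - y j`, and for `j = N - 1` it is `2π - y (N-1) + y 0`. -/
noncomputable def cyclicGap {N : ℕ} (y : Fin N → ℝ) (j : Fin N) : ℝ :=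
  periodicExt y ((j : ℕ) + 1) - periodicExt y (j : ℕ)

/-- A configuration is congruent to the equidistant one iff all cyclic gaps are `2π/N`. -/
def isEquidistant {N : ℕ} (y : Fin N → ℝ) : Prop :=
  ∀ j : Fin N, cyclicGap y j = 2 * Real.pi / N

/-!
Extend the configuration periodically and let `forwardArc y j m` be the length of the arc from
`y j` forward to `y (j + m)`. Every unordered pair is met twice among the arcs with `m ≠ 0`,
and its geodesic distance is `loopDist` of either arc, so twice the energy is
`∑ m ≠ 0, ∑ j, f (forwardArc y j m)` with `f = g ∘ loopDist`. This `f` is strictly convex on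
`(0, 2π)`: `loopDist` is concave and `g` is convex and decreasing, and where `loopDist` fails to be
strictly concave, `g` is strictly decreasing. For fixed `m` the arcs add up to `2πm`, so Jensen's
inequality bounds the inner sum below by `N f (2πm/N)`, its value for the equidistant
configuration. For `m = 1` the arcs are the cyclic gaps, and the bound is strict unless these are
all equal.
-/

open Finset Real

lemma sum_offDiag_eq_two_nsmul_sum_lt {α M : Type*} [LinearOrder α] [Fintype α]
    [AddCommMonoid M] (H : α → α → M) (hH : ∀ a b, H a b = H b a) :
    ∑ p ∈ univ.offDiag, H p.1 p.2
      = 2 • ∑ p ∈ univ.filter (fun p : α × α => p.1 < p.2), H p.1 p.2 := by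
  have hsplit : (univ : Finset α).offDiag = univ.filter (fun p : α × α => p.1 < p.2) ∪
      univ.filter (fun p : α × α => p.2 < p.1) := by
    ext p
    simp only [mem_offDiag, mem_union, mem_filter, mem_univ, true_and]
    exact ne_iff_lt_or_gt
  rw [hsplit, sum_union (disjoint_filter.2 fun p _ h => lt_asymm h), two_nsmul]
  congr 1
  exact sum_nbij' Prod.swap Prod.swap (by simp) (by simp) (by simp) (by simp)
    fun p _ => hH _ _

lemma sum_offDiag_eq_sum_erase_zero_sum_add {G M : Type*} [AddGroup G] [Fintype G]
    [DecidableEq G] [AddCommMonoid M] (H : G → G → M) :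
    ∑ p ∈ univ.offDiag, H p.1 p.2 = ∑ m ∈ univ.erase 0, ∑ j, H j (j + m) := by
  rw [← sum_product' (f := fun m j => H j (j + m))]
  exact sum_nbij' (fun p => (-p.1 + p.2, p.1)) (fun q => (q.2, q.2 + q.1))
    (by simp [neg_add_eq_zero]) (by simp) (by simp) (by simp) (by simp)

lemma sum_range_sub_eq_nsmul_of_add_period {M : Type*} [AddCommGroup M] {x : ℕ → M} {N : ℕ}
    {L : M} (hx : ∀ k, x (k + N) = x k + L) (m : ℕ) :
    ∑ j ∈ range N, (x (j + m) - x j) = m • L := by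
  induction m with
  | zero => simp
  | succ m ih =>
    have hstep : ∑ j ∈ range N, (x (j + 1 + m) - x (j + m)) = L := by
      rw [sum_range_sub (fun j => x (j + m)), zero_add, add_comm N, hx, add_sub_cancel_left]
    calc ∑ j ∈ range N, (x (j + (m + 1)) - x j)
        = ∑ j ∈ range N, ((x (j + 1 + m) - x (j + m)) + (x (j + m) - x j)) :=
          sum_congr rfl fun j _ => by rw [add_right_comm, add_assoc]; abel
      _ = (m + 1) • L := by rw [sum_add_distrib, hstep, ih, succ_nsmul']

theorem ConvexOn.card_mul_map_mean_le {ι : Type*} [Fintype ι] [Nonempty ι] {s : Set ℝ}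
    {f : ℝ → ℝ} (hf : ConvexOn ℝ s f) {p : ι → ℝ} (hp : ∀ i, p i ∈ s) :
    Fintype.card ι * f ((∑ i, p i) / Fintype.card ι) ≤ ∑ i, f (p i) := by
  have hc : (0 : ℝ) < Fintype.card ι := by exact_mod_cast Fintype.card_pos
  have h := hf.map_sum_le (t := univ) (w := fun _ => (Fintype.card ι : ℝ)⁻¹) (p := p)
    (fun _ _ => by positivity) (by simp [hc.ne']) (fun i _ => hp i)
  simp only [smul_eq_mul, ← mul_sum] at h
  rwa [div_eq_inv_mul, ← le_inv_mul_iff₀ hc]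

theorem StrictConvexOn.card_mul_map_mean_lt {ι : Type*} [Fintype ι] [Nonempty ι] {s : Set ℝ}
    {f : ℝ → ℝ} (hf : StrictConvexOn ℝ s f) {p : ι → ℝ} (hp : ∀ i, p i ∈ s)
    (hne : ∃ i, p i ≠ (∑ i, p i) / Fintype.card ι) :
    Fintype.card ι * f ((∑ i, p i) / Fintype.card ι) < ∑ i, f (p i) := by
  have hc : (0 : ℝ) < Fintype.card ι := by exact_mod_cast Fintype.card_pos
  obtain ⟨i, hi⟩ := hne
  have hnc : ∃ k, p i ≠ p k := by
    by_contra! hall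
    refine hi ?_
    simp [← hall, mul_div_cancel_left₀ _ hc.ne']
  obtain ⟨k, hk⟩ := hnc
  have h := hf.map_sum_lt (t := univ) (w := fun _ => (Fintype.card ι : ℝ)⁻¹) (p := p)
    (fun _ _ => by positivity) (by simp [hc.ne']) (fun i _ => hp i)
    ⟨i, mem_univ _, k, mem_univ _, hk⟩
  simp only [smul_eq_mul, ← mul_sum] at h
  rwa [div_eq_inv_mul, ← lt_inv_mul_iff₀ hc]

theorem StrictConvexOn.strictAntiOn_of_antitoneOn {s : Set ℝ} {g : ℝ → ℝ}
    (hg : StrictConvexOn ℝ s g) (hg' : AntitoneOn g s) : StrictAntiOn g s := by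
  intro u hu v hv huv
  have hmid : (1 / 2 : ℝ) • u + (1 / 2 : ℝ) • v ∈ s :=
    hg.1 hu hv (by norm_num) (by norm_num) (by norm_num)
  have hlt := hg.2 hu hv huv.ne (by norm_num : (0 : ℝ) < 1 / 2) (by norm_num : (0 : ℝ) < 1 / 2)
    (by norm_num)
  have hle := hg' hmid hv (by simp only [smul_eq_mul]; linarith)
  simp only [smul_eq_mul] at hlt hle
  linarith

noncomputable def loopDist (t : ℝ) : ℝ := min t (2 * π - t)

lemma loopDist_eq_pi_sub_abs (t : ℝ) : loopDist t = π - |t - π| := by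
  rcases le_total t π with h | h
  · rw [loopDist, min_eq_left (by linarith), abs_of_nonpos (by linarith)]; ring
  · rw [loopDist, min_eq_right (by linarith), abs_of_nonneg (by linarith)]; ring

lemma loopDist_two_pi_sub (t : ℝ) : loopDist (2 * π - t) = loopDist t := by
  rw [loopDist, loopDist, sub_sub_cancel, min_comm]

lemma loopDist_mem_Ioc {t : ℝ} (ht : t ∈ Set.Ioo 0 (2 * π)) : loopDist t ∈ Set.Ioc 0 π := by
  rw [loopDist_eq_pi_sub_abs]
  obtain ⟨h0, h2π⟩ := ht
  exact ⟨by cases abs_cases (t - π) <;> linarith, by linarith [abs_nonneg (t - π)]⟩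

lemma concaveOn_loopDist : ConcaveOn ℝ Set.univ loopDist := by
  refine ⟨convex_univ, fun x _ z _ a b ha hb hab => ?_⟩
  simp only [smul_eq_mul]
  refine le_min (by gcongr <;> exact min_le_left _ _) ?_
  calc a * loopDist x + b * loopDist z ≤ a * (2 * π - x) + b * (2 * π - z) := by
        gcongr <;> exact min_le_right _ _
    _ = 2 * π - (a * x + b * z) := by linear_combination 2 * π * hab

/-- What is left of strict concavity for `loopDist`, which is piecewise linear. -/
lemma loopDist_lt_of_loopDist_eq {x z a b : ℝ} (hxz : x ≠ z) (h : loopDist x = loopDist z)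
    (ha : 0 < a) (hb : 0 < b) (hab : a + b = 1) : loopDist x < loopDist (a * x + b * z) := by
  rw [loopDist_eq_pi_sub_abs, loopDist_eq_pi_sub_abs] at h ⊢
  have hsymm : z - π = -(x - π) := by
    rcases abs_eq_abs.mp (by linarith : |x - π| = |z - π|) with h' | h'
    · exact absurd (by linarith) hxz
    · linarith
  have hpos : 0 < |x - π| := abs_pos.mpr fun h0 => hxz (by linarith)
  have hab' : |a - b| < 1 := abs_lt.mpr ⟨by linarith, by linarith⟩
  have hw : a * x + b * z - π = (a - b) * (x - π) := by linear_combination hsymm * b + π * hab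
  rw [hw, abs_mul]
  nlinarith [abs_nonneg (a - b)]

theorem StrictConvexOn.comp_loopDist {g : ℝ → ℝ} (hg : StrictConvexOn ℝ (Set.Ioc 0 π) g)
    (hg' : AntitoneOn g (Set.Ioc 0 π)) :
    StrictConvexOn ℝ (Set.Ioo 0 (2 * π)) (g ∘ loopDist) := by
  refine ⟨convex_Ioo _ _, fun x hx z hz hxz a b ha hb hab => ?_⟩
  have hw : a • x + b • z ∈ Set.Ioo 0 (2 * π) := convex_Ioo _ _ hx hz ha.le hb.le hab
  simp only [smul_eq_mul, Function.comp] at hw ⊢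
  by_cases hc : loopDist x = loopDist z
  · rw [← hc, ← add_mul, hab, one_mul]
    exact hg.strictAntiOn_of_antitoneOn hg' (loopDist_mem_Ioc hx) (loopDist_mem_Ioc hw)
      (loopDist_lt_of_loopDist_eq hxz hc ha hb hab)
  · calc g (loopDist (a * x + b * z)) ≤ g (a * loopDist x + b * loopDist z) :=
          hg' ((convex_Ioc 0 π) (loopDist_mem_Ioc hx) (loopDist_mem_Ioc hz) ha.le hb.le hab)
            (loopDist_mem_Ioc hw) (concaveOn_loopDist.2 trivial trivial ha.le hb.le hab)
      _ < a * g (loopDist x) + b * g (loopDist z) :=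
          hg.2 (loopDist_mem_Ioc hx) (loopDist_mem_Ioc hz) hc ha hb hab

section PeriodicExt

variable {N : ℕ} [NeZero N] (y : Fin N → ℝ)

lemma periodicExt_val (j : Fin N) : periodicExt y j = y j := by
  rw [periodicExt, dif_pos (NeZero.pos N)]
  simp [Nat.mod_eq_of_lt j.isLt, Nat.div_eq_of_lt j.isLt]

lemma periodicExt_add_period (k : ℕ) : periodicExt y (k + N) = periodicExt y k + 2 * π := by
  simp only [periodicExt, dif_pos (NeZero.pos N), Nat.add_mod_right,
    Nat.add_div_right k (NeZero.pos N)]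
  push_cast
  ring

noncomputable def forwardArc (j m : Fin N) : ℝ := periodicExt y ((j : ℕ) + m) - periodicExt y j

lemma sum_forwardArc (m : Fin N) : ∑ j, forwardArc y j m = 2 * π * m := by
  unfold forwardArc
  rw [Fin.sum_univ_eq_sum_range (fun k => periodicExt y (k + m) - periodicExt y k),
    sum_range_sub_eq_nsmul_of_add_period (periodicExt_add_period y), nsmul_eq_mul, mul_comm]

lemma forwardArc_eq_or {j m : Fin N} (hm : m ≠ 0) :
    (j < j + m ∧ forwardArc y j m = y (j + m) - y j) ∨
      (j + m < j ∧ forwardArc y j m = y (j + m) - y j + 2 * π) := by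
  have hm0 : 0 < (m : ℕ) := Nat.pos_of_ne_zero (Fin.val_ne_zero_iff.mpr hm)
  rcases lt_or_ge ((j : ℕ) + m) N with h | h
  · have hval : ((j + m : Fin N) : ℕ) = j + m := by rw [Fin.val_add, Nat.mod_eq_of_lt h]
    refine .inl ⟨Fin.lt_def.2 (by omega), ?_⟩
    rw [forwardArc, ← hval, periodicExt_val, periodicExt_val]
  · have hval : ((j + m : Fin N) : ℕ) + N = j + m := by
      rw [Fin.val_add, Nat.mod_eq_sub_mod h, Nat.mod_eq_of_lt (by omega)]
      omega
    refine .inr ⟨Fin.lt_def.2 (by omega), ?_⟩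
    rw [forwardArc, ← hval, periodicExt_add_period, periodicExt_val, periodicExt_val]
    ring

variable {y}

lemma forwardArc_mem_Ioo (hy : StrictMono y) (hmem : ∀ j, y j ∈ Set.Ico 0 (2 * π))
    {j m : Fin N} (hm : m ≠ 0) : forwardArc y j m ∈ Set.Ioo 0 (2 * π) := by
  have hj := hmem j
  have hjm := hmem (j + m)
  rcases forwardArc_eq_or y hm with ⟨hlt, h⟩ | ⟨hlt, h⟩ <;> rw [h] <;>
    have := hy hlt <;> constructor <;> linarith [hj.1, hj.2, hjm.1, hjm.2]

lemma loopDist_abs_sub_eq_forwardArc (hy : StrictMono y) {j m : Fin N} (hm : m ≠ 0) :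
    loopDist |y j - y (j + m)| = loopDist (forwardArc y j m) := by
  rcases forwardArc_eq_or y hm with ⟨hlt, h⟩ | ⟨hlt, h⟩ <;> have := hy hlt
  · rw [h, abs_sub_comm, abs_of_pos (by linarith)]
  · rw [h, abs_of_pos (by linarith), ← loopDist_two_pi_sub]
    ring_nf

lemma card_mul_le_sum_forwardArc {f : ℝ → ℝ} (hf : ConvexOn ℝ (Set.Ioo 0 (2 * π)) f)
    (hy : StrictMono y) (hmem : ∀ j, y j ∈ Set.Ico 0 (2 * π)) {m : Fin N} (hm : m ≠ 0) :
    N * f (2 * π * m / N) ≤ ∑ j, f (forwardArc y j m) := by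
  simpa [sum_forwardArc] using
    hf.card_mul_map_mean_le (p := (forwardArc y · m)) fun _ => forwardArc_mem_Ioo hy hmem hm

lemma card_mul_lt_sum_forwardArc {f : ℝ → ℝ} (hf : StrictConvexOn ℝ (Set.Ioo 0 (2 * π)) f)
    (hy : StrictMono y) (hmem : ∀ j, y j ∈ Set.Ico 0 (2 * π)) {m : Fin N} (hm : m ≠ 0)
    (hne : ∃ j, forwardArc y j m ≠ 2 * π * m / N) :
    N * f (2 * π * m / N) < ∑ j, f (forwardArc y j m) := by
  have hmean : (∑ j, forwardArc y j m) / Fintype.card (Fin N) = 2 * π * m / N := by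
    rw [sum_forwardArc, Fintype.card_fin]
  have h := hf.card_mul_map_mean_lt (p := fun j => forwardArc y j m)
    (fun j => forwardArc_mem_Ioo hy hmem hm) (by rwa [hmean])
  rwa [hmean, Fintype.card_fin] at h

end PeriodicExt

noncomputable def loopEnergy {N : ℕ} (g : ℝ → ℝ) (y : Fin N → ℝ) : ℝ :=
  ∑ p ∈ univ.filter (fun p : Fin N × Fin N => p.1 < p.2), g (loopDist |y p.1 - y p.2|)

theorem two_mul_loopEnergy_eq_sum_forwardArc {N : ℕ} [NeZero N] (g : ℝ → ℝ)
    {y : Fin N → ℝ} (hy : StrictMono y) :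
    2 * loopEnergy g y = ∑ m ∈ univ.erase 0, ∑ j, g (loopDist (forwardArc y j m)) := by
  have h := sum_offDiag_eq_two_nsmul_sum_lt (fun a b => g (loopDist |y a - y b|))
    fun a b => by rw [abs_sub_comm]
  rw [loopEnergy, two_mul, ← two_nsmul, ← h]
  refine (sum_offDiag_eq_sum_erase_zero_sum_add fun a b => g (loopDist |y a - y b|)).trans ?_
  exact sum_congr rfl fun m hm => sum_congr rfl fun j _ => by
    rw [loopDist_abs_sub_eq_forwardArc hy (ne_of_mem_erase hm)]

-- A rotation of the paper's configuration `π(2j-1)/N`.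
noncomputable def equidistant (N : ℕ) (j : Fin N) : ℝ := 2 * π * j / N

section Equidistant

variable {N : ℕ} [NeZero N]

lemma equidistant_strictMono : StrictMono (equidistant N) := fun a b h => by
  unfold equidistant
  gcongr
  · exact Nat.cast_pos.2 (NeZero.pos N)
  · exact_mod_cast h

lemma periodicExt_equidistant (k : ℕ) : periodicExt (equidistant N) k = 2 * π * k / N := by
  have hN : (N : ℝ) ≠ 0 := Nat.cast_ne_zero.mpr (NeZero.ne N)
  rw [periodicExt, dif_pos (NeZero.pos N), equidistant]
  conv_rhs => rw [← Nat.mod_add_div k N]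
  push_cast
  field_simp

lemma forwardArc_equidistant (j m : Fin N) : forwardArc (equidistant N) j m = 2 * π * m / N := by
  rw [forwardArc, periodicExt_equidistant, periodicExt_equidistant]
  push_cast
  ring

lemma loopDist_two_pi_mul_div {k : ℕ} (hk : k ≤ N) :
    loopDist (2 * π * k / N) = 2 * π / N * ((min k (N - k) : ℕ) : ℝ) := by
  have hN : (N : ℝ) ≠ 0 := Nat.cast_ne_zero.mpr (NeZero.ne N)
  rw [Nat.cast_min, Nat.cast_sub hk, mul_min_of_nonneg _ _ (by positivity), loopDist]
  congr 1 <;> field_simp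

lemma loopEnergy_equidistant (g : ℝ → ℝ) :
    loopEnergy g (equidistant N) =
      ∑ p ∈ Finset.univ.filter (fun p : Fin N × Fin N => p.1 < p.2),
        g ((2 * Real.pi / N) *
          ((min ((p.2 : ℕ) - (p.1 : ℕ)) (N - ((p.2 : ℕ) - (p.1 : ℕ))) : ℕ) : ℝ)) := by
  refine sum_congr rfl fun p hp => ?_
  have hlt : p.1 < p.2 := (mem_filter.1 hp).2
  have habs :
      |equidistant N p.1 - equidistant N p.2| = 2 * π * ((p.2 : ℕ) - (p.1 : ℕ) : ℕ) / N := by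
    rw [abs_sub_comm, abs_of_pos (sub_pos.2 (equidistant_strictMono hlt)),
      Nat.cast_sub (Fin.lt_def.1 hlt).le, equidistant, equidistant]
    ring
  rw [habs, loopDist_two_pi_mul_div (by omega)]

end Equidistant

theorem loop_convex_energy_min (N : ℕ) (hN : 2 ≤ N) (g : ℝ → ℝ)
    (hconv : StrictConvexOn ℝ (Set.Ioc 0 Real.pi) g)
    (hanti : AntitoneOn g (Set.Ioc 0 Real.pi))
    (y : Fin N → ℝ) (hmono : StrictMono y)
    (hmem : ∀ j, y j ∈ Set.Ico 0 (2 * Real.pi)) :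
    (∑ p ∈ Finset.univ.filter (fun p : Fin N × Fin N => p.1 < p.2),
        g (min |y p.1 - y p.2| (2 * Real.pi - |y p.1 - y p.2|)))
      ≥ (∑ p ∈ Finset.univ.filter (fun p : Fin N × Fin N => p.1 < p.2),
          g ((2 * Real.pi / N) *
            ((min ((p.2 : ℕ) - (p.1 : ℕ)) (N - ((p.2 : ℕ) - (p.1 : ℕ))) : ℕ) : ℝ))) ∧
    (¬ isEquidistant y →
      (∑ p ∈ Finset.univ.filter (fun p : Fin N × Fin N => p.1 < p.2),
          g (min |y p.1 - y p.2| (2 * Real.pi - |y p.1 - y p.2|)))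
        > (∑ p ∈ Finset.univ.filter (fun p : Fin N × Fin N => p.1 < p.2),
            g ((2 * Real.pi / N) *
              ((min ((p.2 : ℕ) - (p.1 : ℕ)) (N - ((p.2 : ℕ) - (p.1 : ℕ))) : ℕ) : ℝ)))) := by
  have : NeZero N := ⟨by omega⟩
  have hf := hconv.comp_loopDist hanti
  have hL := two_mul_loopEnergy_eq_sum_forwardArc g hmono
  have hR := two_mul_loopEnergy_eq_sum_forwardArc g (equidistant_strictMono (N := N))
  simp only [forwardArc_equidistant, sum_const, card_univ, Fintype.card_fin, nsmul_eq_mul] at hR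
  have hstep : ∀ m ∈ (univ : Finset (Fin N)).erase 0, N * g (loopDist (2 * π * m / N))
      ≤ ∑ j, g (loopDist (forwardArc y j m)) := fun m hm =>
    card_mul_le_sum_forwardArc hf.convexOn hmono hmem (ne_of_mem_erase hm)
  rw [← loopEnergy_equidistant]
  change loopEnergy g y ≥ _ ∧ (_ → loopEnergy g y > _)
  refine ⟨by linarith [sum_le_sum hstep], fun hne => ?_⟩
  obtain ⟨j, hj⟩ := not_forall.mp hne
  have hgap : forwardArc y j ⟨1, hN⟩ ≠ 2 * π / N := hj
  have h1 : (⟨1, hN⟩ : Fin N) ≠ 0 := Fin.ne_of_val_ne one_ne_zero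
  linarith [sum_lt_sum hstep ⟨⟨1, hN⟩, mem_erase.2 ⟨h1, mem_univ _⟩,
    card_mul_lt_sum_forwardArc hf hmono hmem h1 ⟨j, by simpa using hgap⟩⟩]
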